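/- Let α be a composition with ℓ(α) ≤ n. Then (1) the set of quasi-ribbon words in 𝒜_n^* of shape α is exactly the vertex set of a single connected component of the quasi-crystal graph Γ(hypo_n); and (2) this connected component contains a unique highest-weight word, namely the column reading of the quasi-ribbon tableau of shape α whose j-th row consists entirely of symbols j, for j = 1,...,ℓ(α). -/

import Mathlib

/-!
Common setup: words over the alphabet `𝒜_n = {1,…,n}` (modelled as `List ℕ`),
quasi-Kashiwara operators, the quasi-crystal graph, Kashiwara operators,
quasi-ribbon words, and the hypoplactic congruence.
-/

namespace HypoCrystal

noncomputable section
open scoped Classical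

/-- `u` is a word over the alphabet `𝒜_n = {1,…,n}`. -/
def IsWord (n : ℕ) (u : List ℕ) : Prop := ∀ a ∈ u, 1 ≤ a ∧ a ≤ n

/-- `u` has an `i`-inversion: some letter `i+1` occurs strictly to the left of some letter `i`. -/
def HasInv (i : ℕ) (u : List ℕ) : Prop :=
  ∃ v w x : List ℕ, u = v ++ (i + 1) :: w ++ i :: x

/-- Replace the first (leftmost) occurrence of `a` by `b`, if any; otherwise `none`. -/
def replaceFirst (a b : ℕ) : List ℕ → Option (List ℕ)
  | [] => none
  | x :: xs => if x = a then some (b :: xs) else (replaceFirst a b xs).map (x :: ·)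

/-- The quasi-Kashiwara raising operator `e_i` (partial map, `none` = undefined):
if `u` has an `i`-inversion it is undefined; otherwise it replaces the leftmost
letter `i+1` by `i` (undefined if there is no letter `i+1`). -/
def qe (i : ℕ) (u : List ℕ) : Option (List ℕ) :=
  if HasInv i u then none else replaceFirst (i + 1) i u

/-- The quasi-Kashiwara lowering operator `f_i` (partial map, `none` = undefined):
if `u` has an `i`-inversion it is undefined; otherwise it replaces the rightmost
letter `i` by `i+1` (undefined if there is no letter `i`). -/
def qf (i : ℕ) (u : List ℕ) : Option (List ℕ) :=
  if HasInv i u then none else (replaceFirst i (i + 1) u.reverse).map List.reverse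

/-- Weight of a word: `wt u a` is the number of occurrences of the letter `a` in `u`. -/
def wt (u : List ℕ) : ℕ → ℕ := fun a => u.count a

/-- There is an edge labelled `i` from `u` to `v` in the quasi-crystal graph `Γ(hypo_n)`. -/
def Edge (n i : ℕ) (u v : List ℕ) : Prop := 1 ≤ i ∧ i < n ∧ qf i u = some v

/-- `u` and `v` are adjacent (in the underlying undirected graph) in `Γ(hypo_n)`. -/
def Adj (n : ℕ) (u v : List ℕ) : Prop := ∃ i, Edge n i u v ∨ Edge n i v u

/-- `v` lies in the connected component `Γ(hypo_n, u)` of `u` in the quasi-crystal graph. -/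
def SameComp (n : ℕ) : List ℕ → List ℕ → Prop := Relation.ReflTransGen (Adj n)

/-- `u` is a highest-weight word: no raising operator `e_i` is defined on `u`. -/
def HighestWeight (n : ℕ) (u : List ℕ) : Prop := ∀ i, 1 ≤ i → i < n → qe i u = none

/-- `θ` is a quasi-crystal isomorphism from the component of `u` onto the component of `v`:
a weight-preserving bijection preserving labelled edges in both directions. -/
def IsQCIso (n : ℕ) (u v : List ℕ) (θ : List ℕ → List ℕ) : Prop :=
  Set.BijOn θ {x | SameComp n u x} {y | SameComp n v y} ∧
  (∀ x, SameComp n u x → wt (θ x) = wt x) ∧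
  (∀ x y, SameComp n u x → SameComp n u y → ∀ i, (Edge n i x y ↔ Edge n i (θ x) (θ y)))

/-- `u ∼ v`: there is a quasi-crystal isomorphism between the components of `u` and `v`
taking `u` to `v`. -/
def Sim (n : ℕ) (u v : List ℕ) : Prop :=
  ∃ θ : List ℕ → List ℕ, IsQCIso n u v θ ∧ θ u = v

/-- The standardization of `u`: position `k` receives the rank (starting at 1) of the
pair `(u_k, k)` among all pairs `(u_l, l)` ordered lexicographically. -/
def std (u : List ℕ) : List ℕ :=
  (List.range u.length).map fun k =>
    1 + ((List.range u.length).filter fun l =>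
      u.getD l 0 < u.getD k 0 ∨ (u.getD l 0 = u.getD k 0 ∧ l < k)).length

/-- The maximal strictly decreasing factors of a word (the columns of its
quasi-ribbon tabloid, each read bottom-to-top). -/
def decFactors : List ℕ → List (List ℕ)
  | [] => []
  | a :: rest =>
    match decFactors rest with
    | (b :: f) :: fs => if b < a then (a :: b :: f) :: fs else [a] :: (b :: f) :: fs
    | l => [a] :: l

/-- `w` is a quasi-ribbon word: its quasi-ribbon tabloid is a quasi-ribbon tableau,
i.e. the bottom entry of each column is ≤ the top entry of the next column. -/
def IsQRWord (w : List ℕ) : Prop :=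
  (decFactors w).Chain' fun c d => c.headD 0 ≤ d.getLastD 0

/-- Row lengths (top to bottom) of the ribbon diagram whose column heights
(left to right) are given. -/
def rowLengths : List ℕ → List ℕ
  | [] => []
  | [d] => List.replicate d 1
  | d :: e :: rest =>
    List.replicate (d - 1) 1 ++
      (match rowLengths (e :: rest) with
       | [] => [1]
       | r :: rs => (r + 1) :: rs)

/-- The shape (as a composition, listed top row first) of the quasi-ribbon tabloid of `w`. -/
def shape (w : List ℕ) : List ℕ := rowLengths ((decFactors w).map List.length)

/-- Columns of the quasi-ribbon tableau of shape `α` whose `j`-th row consists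
entirely of symbols `j`, where rows are labelled starting from `j₀`. -/
def hwCols : List ℕ → ℕ → List (List ℕ)
  | [], _ => []
  | [a], j => List.replicate a [j]
  | a :: b :: rest, j =>
    List.replicate (a - 1) [j] ++
      (match hwCols (b :: rest) (j + 1) with
       | [] => [[j]]
       | c :: cs => (c ++ [j]) :: cs)

/-- The column reading of the quasi-ribbon tableau of shape `α` whose `j`-th row
consists entirely of symbols `j`. -/
def hwQR (α : List ℕ) : List ℕ := (hwCols α 1).flatten

/-- The defining relations `R_hypo` of the hypoplactic monoid of rank `n`. -/
inductive HypoRel (n : ℕ) : List ℕ → List ℕ → Prop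
  | knuth1 {a b c : ℕ} : 1 ≤ a → a ≤ b → b < c → c ≤ n → HypoRel n [a, c, b] [c, a, b]
  | knuth2 {a b c : ℕ} : 1 ≤ a → a < b → b ≤ c → c ≤ n → HypoRel n [b, a, c] [b, c, a]
  | quasi1 {a b c d : ℕ} : 1 ≤ a → a ≤ b → b < c → c ≤ d → d ≤ n →
      HypoRel n [c, a, d, b] [a, c, b, d]
  | quasi2 {a b c d : ℕ} : 1 ≤ a → a < b → b ≤ c → c < d → d ≤ n →
      HypoRel n [b, d, a, c] [d, b, c, a]

/-- The hypoplactic congruence `≡_hypo`: the congruence on the free monoid generated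
by the relations `R_hypo`. -/
inductive HypoCong (n : ℕ) : List ℕ → List ℕ → Prop
  | of {u v} : HypoRel n u v → HypoCong n u v
  | refl (u) : HypoCong n u u
  | symm {u v} : HypoCong n u v → HypoCong n v u
  | trans {u v w} : HypoCong n u v → HypoCong n v w → HypoCong n u w
  | append {u v u' v'} : HypoCong n u v → HypoCong n u' v' →
      HypoCong n (u ++ u') (v ++ v')

/-- The signature word of `u` for index `i`: each letter `i` becomes `(position, true)`
(that is, `+`) and each letter `i+1` becomes `(position, false)` (that is, `−`). -/
def signWord (i : ℕ) (u : List ℕ) : List (ℕ × Bool) :=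
  (u.zipIdx.map Prod.swap).filterMap fun pa =>
    if pa.2 = i then some (pa.1, true)
    else if pa.2 = i + 1 then some (pa.1, false) else none

/-- Iteratively delete factors `−+` from a signature word, producing the reduced
word `+^p −^q`. -/
def reduce : List (ℕ × Bool) → List (ℕ × Bool)
  | [] => []
  | x :: rest =>
    match reduce rest with
    | y :: rest' => if x.2 = false ∧ y.2 = true then rest' else x :: y :: rest'
    | [] => [x]

/-- The Kashiwara raising operator `ẽ_i`, computed by the signature rule: change to `i`
the letter `i+1` corresponding to the leftmost `−` of the reduced signature word. -/
def KE (i : ℕ) (u : List ℕ) : Option (List ℕ) :=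
  (((reduce (signWord i u)).filter fun x => !x.2).head?).map fun x => u.set x.1 i

/-- The Kashiwara lowering operator `f̃_i`, computed by the signature rule: change to `i+1`
the letter `i` corresponding to the rightmost `+` of the reduced signature word. -/
def KF (i : ℕ) (u : List ℕ) : Option (List ℕ) :=
  (((reduce (signWord i u)).filter fun x => x.2).getLast?).map fun x => u.set x.1 (i + 1)

/-- The Schützenberger involution on `𝒜_n^*`: reverse the word and replace each
letter `a` by `n − a + 1`. -/
def sharp (n : ℕ) (u : List ℕ) : List ℕ := u.reverse.map fun a => n + 1 - a

/-- The largest letter occurring in `u` (0 for the empty word). -/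
def maxLetter (u : List ℕ) : ℕ := u.foldr max 0

/-- `β` is coarser than `α` (`β ⪯ α`): they have the same weight and every proper
partial sum of `β` is a proper partial sum of `α`. -/
def Coarser (β α : List ℕ) : Prop :=
  β.sum = α.sum ∧ ∀ p < β.length, ∃ m < α.length, (β.take p).sum = (α.take m).sum

end
end HypoCrystal

/-!
The lowering operator `f_i` turns a letter `i` into `i + 1` only when no `i + 1` stands to its
left and no `i` to its right, so the changed letter compares with each letter to its left, and
with each letter to its right, exactly as before. The factorization of a word into maximal
decreasing factors (the columns of its quasi-ribbon tabloid) and the quasi-ribbon condition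
depend only on such left-to-right comparisons, so the quasi-ribbon words of shape `α` are a union
of connected components.

Each `e_i` lowers the sum of the letters, so every quasi-ribbon word is connected to a
highest-weight one. In a highest-weight word every letter `i + 1` stands to the left of some
letter `i`; hence the smallest letter `j` occurs, and in the quasi-ribbon tableau the `j`s fill
exactly the top row: the columns start with some `[j]`s followed by one column ending in `j`.
Deleting them and recursing with `j + 1` shows that the word is `hwQR` of its shape, so the
quasi-ribbon words of shape `α` form the single component of the highest-weight word `hwQR α`.
-/

namespace List

variable {α : Type*}

theorem headD_append_cons (g₁ g₂ : List α) (x d : α) :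
    (g₁ ++ x :: g₂).headD d = g₁.headD x := by
  cases g₁ <;> simp

theorem getLastD_append_cons (g₁ g₂ : List α) (x d : α) :
    (g₁ ++ x :: g₂).getLastD d = g₂.getLastD x := by
  simp [getLastD_eq_getLast?, getLast?_append, getLast?_cons]

theorem headD_mem {l : List α} (h : l ≠ []) (d : α) : l.headD d ∈ l := by
  cases l with
  | nil => exact absurd rfl h
  | cons a t => simp

theorem getLastD_mem {l : List α} (h : l ≠ []) (d : α) : l.getLastD d ∈ l := by
  cases l with
  | nil => exact absurd rfl h
  | cons a t => rw [getLastD_cons]; exact getLastD_mem_cons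

theorem exists_of_flatten_eq_append_cons {fs : List (List α)} {u₁ u₂ : List α} {x : α}
    (h : fs.flatten = u₁ ++ x :: u₂) :
    ∃ fs₁ g₁ g₂ fs₂, fs = fs₁ ++ (g₁ ++ x :: g₂) :: fs₂ ∧
      u₁ = fs₁.flatten ++ g₁ ∧ u₂ = g₂ ++ fs₂.flatten := by
  rcases flatten_eq_append_iff.1 h with
    ⟨as, bs, rfl, rfl, hbs⟩ | ⟨as, bs, c, cs, ds, rfl, rfl, hc⟩
  · obtain ⟨as', bs', cs', rfl, hnil, rfl⟩ := flatten_eq_cons_iff.1 hbs.symm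
    exact ⟨as ++ as', [], bs', cs', by simp, by simp [flatten_eq_nil_iff.2 hnil], rfl⟩
  · obtain ⟨rfl, rfl⟩ := cons.inj hc
    exact ⟨as, bs, cs, ds, rfl, rfl, rfl⟩

theorem IsChain.append_cons_of_imp {R : α → α → Prop} {l₁ l₂ : List α} {a b : α}
    (h : IsChain R (l₁ ++ a :: l₂)) (h₁ : ∀ p ∈ l₁.getLast?, R p a → R p b)
    (h₂ : ∀ q ∈ l₂.head?, R a q → R b q) : IsChain R (l₁ ++ b :: l₂) := by
  rw [isChain_append] at h ⊢
  obtain ⟨hl, ha, hla⟩ := h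
  rw [List.isChain_cons] at ha ⊢
  refine ⟨hl, ⟨fun q hq => h₂ q hq (ha.1 q hq), ha.2⟩, fun p hp q hq => ?_⟩
  obtain rfl : q = b := by simpa using hq.symm
  exact h₁ p hp (hla p hp a (by simp))

theorem isChain_replicate_append {R : α → α → Prop} {a : α} {l : List α} (k : ℕ) (haa : R a a)
    (hal : ∀ b ∈ l.head?, R a b) (hl : IsChain R l) : IsChain R (replicate k a ++ l) :=
  isChain_append.2 ⟨isChain_replicate_of_rel k haa, hl, fun _ hx y hy =>
    (eq_of_mem_replicate (mem_of_mem_getLast? hx)) ▸ hal y hy⟩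

end List

namespace HypoCrystal

open List

section Operators

variable {a b i : ℕ} {u v : List ℕ}

theorem replaceFirst_eq_none_iff : replaceFirst a b u = none ↔ a ∉ u := by
  induction u with
  | nil => simp [replaceFirst]
  | cons x xs ih => by_cases hx : x = a <;> simp [replaceFirst, hx, ih, Ne.symm]

theorem replaceFirst_eq_some_iff :
    replaceFirst a b u = some v ↔ ∃ u₁ u₂, a ∉ u₁ ∧ u = u₁ ++ a :: u₂ ∧ v = u₁ ++ b :: u₂ := by
  induction u generalizing v with
  | nil => simp [replaceFirst]
  | cons x xs ih =>
    by_cases hx : x = a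
    · subst hx
      simp only [replaceFirst, if_true, Option.some.injEq]
      constructor
      · rintro rfl; exact ⟨[], xs, by simp⟩
      · rintro ⟨_ | ⟨y, u₁⟩, u₂, h₁, h₂, rfl⟩
        · simp_all
        · simp_all
    · simp only [replaceFirst, hx, if_false, Option.map_eq_some_iff, ih]
      constructor
      · rintro ⟨_, ⟨u₁, u₂, h₁, rfl, rfl⟩, rfl⟩
        exact ⟨x :: u₁, u₂, by simp [h₁, Ne.symm hx], rfl, rfl⟩
      · rintro ⟨_ | ⟨y, u₁⟩, u₂, h₁, h₂, rfl⟩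
        · simp_all
        · simp only [cons_append, cons.injEq] at h₂
          obtain ⟨rfl, rfl⟩ := h₂
          exact ⟨_, ⟨u₁, u₂, by simp_all, rfl, rfl⟩, rfl⟩

theorem hasInv_iff_sublist : HasInv i u ↔ [i + 1, i] <+ u := by
  constructor
  · rintro ⟨v, w, x, rfl⟩
    exact (singleton_sublist.2 (mem_append_right v mem_cons_self)).append
      (singleton_sublist.2 mem_cons_self)
  · rw [cons_sublist_iff]
    rintro ⟨r₁, r₂, rfl, hr₁, hr₂⟩
    obtain ⟨p, q, rfl⟩ := append_of_mem hr₁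
    obtain ⟨s, t, rfl⟩ := append_of_mem (singleton_sublist.1 hr₂)
    exact ⟨p, q ++ s, t, by simp⟩

theorem hasInv_nil : ¬HasInv i [] := by simp [hasInv_iff_sublist]

theorem hasInv_cons_iff :
    HasInv i (a :: u) ↔ (a = i + 1 ∧ i ∈ u) ∨ HasInv i u := by
  simp only [hasInv_iff_sublist, sublist_cons_iff]
  constructor
  · rintro (h | ⟨r, hr, h⟩)
    · exact Or.inr h
    · simp only [cons.injEq] at hr
      obtain ⟨rfl, rfl⟩ := hr
      exact Or.inl ⟨rfl, singleton_sublist.1 h⟩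
  · rintro (⟨rfl, h⟩ | h)
    · exact Or.inr ⟨[i], rfl, singleton_sublist.2 h⟩
    · exact Or.inl h

theorem hasInv_append_iff :
    HasInv i (u ++ v) ↔ HasInv i u ∨ (i + 1 ∈ u ∧ i ∈ v) ∨ HasInv i v := by
  induction u with
  | nil => simp [hasInv_nil]
  | cons a u ih =>
    simp only [cons_append, hasInv_cons_iff, ih, mem_cons, mem_append]
    grind

theorem HasInv.mem_left (h : HasInv i u) : i + 1 ∈ u :=
  (hasInv_iff_sublist.1 h).subset (by simp)

theorem HasInv.mem_right (h : HasInv i u) : i ∈ u :=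
  (hasInv_iff_sublist.1 h).subset (by simp)

theorem not_hasInv_replicate (s j : ℕ) : ¬HasInv i (replicate s j) := fun h => by
  have h₁ := eq_of_mem_replicate h.mem_left
  have h₂ := eq_of_mem_replicate h.mem_right
  omega

theorem HasInv.mono (h : HasInv i u) (huv : u <+ v) : HasInv i v :=
  hasInv_iff_sublist.2 ((hasInv_iff_sublist.1 h).trans huv)

theorem qe_eq_none_iff : qe i u = none ↔ HasInv i u ∨ i + 1 ∉ u := by
  unfold qe; split_ifs with h <;> simp [h, replaceFirst_eq_none_iff]

theorem qe_eq_some_iff :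
    qe i u = some v ↔
      ¬HasInv i u ∧ ∃ u₁ u₂, i + 1 ∉ u₁ ∧ u = u₁ ++ (i + 1) :: u₂ ∧ v = u₁ ++ i :: u₂ := by
  unfold qe; split_ifs with h <;> simp [h, replaceFirst_eq_some_iff]

theorem qf_eq_some_iff :
    qf i u = some v ↔
      ¬HasInv i u ∧ ∃ u₁ u₂, i ∉ u₂ ∧ u = u₁ ++ i :: u₂ ∧ v = u₁ ++ (i + 1) :: u₂ := by
  unfold qf; split_ifs with h
  · simp [h]
  · simp only [h, not_false_iff, true_and, Option.map_eq_some_iff, replaceFirst_eq_some_iff]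
    constructor
    · rintro ⟨_, ⟨r₁, r₂, hr, hu, rfl⟩, rfl⟩
      refine ⟨r₂.reverse, r₁.reverse, by simpa using hr, ?_, by simp⟩
      simpa using congrArg reverse hu
    · rintro ⟨u₁, u₂, hu₂, rfl, rfl⟩
      exact ⟨_, ⟨u₂.reverse, u₁.reverse, by simpa using hu₂, by simp, rfl⟩, by simp⟩

theorem qf_eq_some_iff_qe_eq_some :
    qf i u = some v ↔ qe i v = some u := by
  rw [qf_eq_some_iff, qe_eq_some_iff]
  constructor
  · rintro ⟨hu, u₁, u₂, hu₂, rfl, rfl⟩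
    simp only [hasInv_append_iff, hasInv_cons_iff] at hu
    refine ⟨?_, u₁, u₂, by tauto, rfl, rfl⟩
    simp only [hasInv_append_iff, hasInv_cons_iff]
    grind
  · rintro ⟨hv, u₁, u₂, hu₁, rfl, rfl⟩
    simp only [hasInv_append_iff, hasInv_cons_iff] at hv
    refine ⟨?_, u₁, u₂, by tauto, rfl, rfl⟩
    simp only [hasInv_append_iff, hasInv_cons_iff]
    grind

theorem sum_add_one_of_qe_eq_some (h : qe i u = some v) :
    v.sum + 1 = u.sum := by
  obtain ⟨-, u₁, u₂, -, rfl, rfl⟩ := qe_eq_some_iff.1 h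
  simp only [sum_append, sum_cons]
  omega

end Operators

section DecFactors

def IsDecFactorization (fs : List (List ℕ)) : Prop :=
  (∀ f ∈ fs, f ≠ []) ∧ (∀ f ∈ fs, f.IsChain (· > ·)) ∧
    fs.IsChain fun c d => c.getLastD 0 ≤ d.headD 0

@[simp] theorem isDecFactorization_nil : IsDecFactorization [] := by
  simp [IsDecFactorization]

theorem isDecFactorization_cons {f : List ℕ} {fs : List (List ℕ)} :
    IsDecFactorization (f :: fs) ↔ f ≠ [] ∧ f.IsChain (· > ·) ∧
      (∀ g ∈ fs.head?, f.getLastD 0 ≤ g.headD 0) ∧ IsDecFactorization fs := by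
  simp only [IsDecFactorization, mem_cons, forall_eq_or_imp, isChain_cons]
  tauto

theorem IsDecFactorization.of_append_right {fs₁ fs₂ : List (List ℕ)}
    (h : IsDecFactorization (fs₁ ++ fs₂)) : IsDecFactorization fs₂ :=
  ⟨fun f hf => h.1 f (mem_append_right _ hf), fun f hf => h.2.1 f (mem_append_right _ hf),
    h.2.2.right_of_append⟩

theorem isDecFactorization_replicate_append {k j : ℕ} {f : List ℕ} {fs : List (List ℕ)}
    (h : IsDecFactorization (f :: fs)) (hj : j ≤ f.headD 0) :
    IsDecFactorization (replicate k [j] ++ f :: fs) := by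
  obtain ⟨hne, hdec, hch⟩ := h
  refine ⟨fun g hg => ?_, fun g hg => ?_,
    isChain_replicate_append k (by simp) (by simpa using hj) hch⟩
  all_goals
    rcases mem_append.1 hg with hg | hg
    · simp [eq_of_mem_replicate hg]
  · exact hne g hg
  · exact hdec g hg

theorem decFactors_cons_of_lt {a b : ℕ} {f rest : List ℕ} {fs : List (List ℕ)}
    (h : decFactors rest = (b :: f) :: fs) (hba : b < a) :
    decFactors (a :: rest) = (a :: b :: f) :: fs := by
  simp [decFactors, h, hba]

theorem decFactors_cons_of_le {a b : ℕ} {f rest : List ℕ} {fs : List (List ℕ)}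
    (h : decFactors rest = (b :: f) :: fs) (hab : a ≤ b) :
    decFactors (a :: rest) = [a] :: (b :: f) :: fs := by
  simp [decFactors, h, not_lt.2 hab]

theorem decFactors_flatten (u : List ℕ) : (decFactors u).flatten = u := by
  induction u with
  | nil => rfl
  | cons a rest ih =>
    rw [decFactors]
    rcases hd : decFactors rest with _ | ⟨_ | ⟨b, f⟩, fs⟩ <;> rw [hd] at ih
    · simpa using ih.symm
    · simpa using ih
    · by_cases hba : b < a <;> simp [hba, ← ih]

theorem isDecFactorization_decFactors (u : List ℕ) : IsDecFactorization (decFactors u) := by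
  induction u with
  | nil => simp [decFactors]
  | cons a rest ih =>
    rcases hd : decFactors rest with _ | ⟨g, fs⟩
    · simp [decFactors, hd, isDecFactorization_cons]
    rw [hd, isDecFactorization_cons] at ih
    obtain ⟨hg, hgc, hgfs, hfs⟩ := ih
    obtain ⟨b, f, rfl⟩ := exists_cons_of_ne_nil hg
    rcases lt_or_ge b a with hba | hab
    · rw [decFactors_cons_of_lt hd hba, isDecFactorization_cons]
      refine ⟨by simp, isChain_cons_cons.2 ⟨hba, hgc⟩, ?_, hfs⟩
      simpa [getLastD_cons] using hgfs
    · rw [decFactors_cons_of_le hd hab, isDecFactorization_cons, isDecFactorization_cons]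
      exact ⟨by simp, by simp, by simpa using hab, hg, hgc, hgfs, hfs⟩

theorem decFactors_append_of_isChain {f r : List ℕ} (hf : f ≠ []) (hfc : f.IsChain (· > ·))
    (hfr : ∀ g ∈ (decFactors r).head?, f.getLastD 0 ≤ g.headD 0) :
    decFactors (f ++ r) = f :: decFactors r := by
  induction f with
  | nil => exact absurd rfl hf
  | cons x f ih =>
    rcases f with _ | ⟨y, f⟩
    · rcases hd : decFactors r with _ | ⟨g, fs⟩
      · simp [decFactors, hd]
      · obtain ⟨b, g, rfl⟩ := exists_cons_of_ne_nil
          ((isDecFactorization_decFactors r).1 g (by simp [hd]))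
        simpa using decFactors_cons_of_le hd (by simpa [hd] using hfr)
    · have hxy := (isChain_cons_cons.1 hfc).1
      have hrec := ih (by simp) (isChain_cons_cons.1 hfc).2 (by simpa [getLastD_cons] using hfr)
      simpa using decFactors_cons_of_lt hrec hxy

theorem decFactors_flatten_of_isDecFactorization {fs : List (List ℕ)}
    (h : IsDecFactorization fs) : decFactors fs.flatten = fs := by
  induction fs with
  | nil => rfl
  | cons f fs ih =>
    rw [isDecFactorization_cons] at h
    obtain ⟨hf, hfc, hffs, hfs⟩ := h
    rw [flatten_cons, decFactors_append_of_isChain hf hfc (by rwa [ih hfs]), ih hfs]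

end DecFactors

section Swap

variable {fs₁ fs₂ : List (List ℕ)} {g₁ g₂ u₁ u₂ : List ℕ} {x y : ℕ}

theorem mem_append_cons_swap {f : List ℕ} (hf : f ∈ fs₁ ++ (g₁ ++ y :: g₂) :: fs₂) :
    f = g₁ ++ y :: g₂ ∨ f ∈ fs₁ ++ (g₁ ++ x :: g₂) :: fs₂ := by
  simp only [mem_append, mem_cons] at hf ⊢
  tauto

theorem isDecFactorization_swap
    (hl : ∀ z ∈ fs₁.flatten ++ g₁, z ≤ x ↔ z ≤ y) (hr : ∀ z ∈ g₂ ++ fs₂.flatten, x ≤ z ↔ y ≤ z)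
    (h : IsDecFactorization (fs₁ ++ (g₁ ++ x :: g₂) :: fs₂)) :
    IsDecFactorization (fs₁ ++ (g₁ ++ y :: g₂) :: fs₂) := by
  obtain ⟨hne, hdec, hbd⟩ := h
  refine ⟨fun f hf => ?_, fun f hf => ?_, hbd.append_cons_of_imp ?_ ?_⟩
  · rcases mem_append_cons_swap (x := x) hf with rfl | hf
    · simp
    · exact hne f hf
  · rcases mem_append_cons_swap (x := x) hf with rfl | hf
    · refine (hdec (g₁ ++ x :: g₂) (by simp)).append_cons_of_imp
        (fun p hp hpx => ?_) (fun q hq hxq => ?_)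
      · have := hl p (mem_append_right _ (mem_of_mem_getLast? hp))
        omega
      · have := hr q (mem_append_left _ (mem_of_mem_head? hq))
        omega
    · exact hdec f hf
  · intro p hp hpx
    rw [headD_append_cons] at hpx ⊢
    cases g₁ with
    | nil =>
      have hp' := mem_of_mem_getLast? hp
      exact (hl _ (mem_append_left _ (mem_flatten.2
        ⟨p, hp', getLastD_mem (hne p (mem_append_left _ hp')) 0⟩))).1 hpx
    | cons => exact hpx
  · intro q hq hxq
    rw [getLastD_append_cons] at hxq ⊢
    cases g₂ with
    | nil =>
      have hq' := mem_of_mem_head? hq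
      exact (hr _ (mem_append_right _ (mem_flatten.2
        ⟨q, hq', headD_mem (hne q (by simp [hq'])) 0⟩))).1 hxq
    | cons => exact hxq

theorem isChain_qr_swap
    (hl : ∀ z ∈ fs₁.flatten ++ g₁, z ≤ x ↔ z ≤ y) (hr : ∀ z ∈ g₂ ++ fs₂.flatten, x ≤ z ↔ y ≤ z)
    (hne : ∀ f ∈ fs₁ ++ fs₂, f ≠ [])
    (h : (fs₁ ++ (g₁ ++ x :: g₂) :: fs₂).IsChain fun c d => c.headD 0 ≤ d.getLastD 0) :
    (fs₁ ++ (g₁ ++ y :: g₂) :: fs₂).IsChain fun c d => c.headD 0 ≤ d.getLastD 0 := by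
  refine h.append_cons_of_imp (fun p hp hpx => ?_) (fun q hq hxq => ?_)
  · rw [getLastD_append_cons] at hpx ⊢
    cases g₂ with
    | nil =>
      have hp' := mem_of_mem_getLast? hp
      exact (hl _ (mem_append_left _ (mem_flatten.2
        ⟨p, hp', headD_mem (hne p (mem_append_left _ hp')) 0⟩))).1 hpx
    | cons => exact hpx
  · rw [headD_append_cons] at hxq ⊢
    cases g₁ with
    | nil =>
      have hq' := mem_of_mem_head? hq
      exact (hr _ (mem_append_right _ (mem_flatten.2
        ⟨q, hq', getLastD_mem (hne q (mem_append_right _ hq')) 0⟩))).1 hxq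
    | cons => exact hxq

theorem exists_decFactors_swap (hl : ∀ z ∈ u₁, z ≤ x ↔ z ≤ y) (hr : ∀ z ∈ u₂, x ≤ z ↔ y ≤ z) :
    ∃ fs₁ g₁ g₂ fs₂, u₁ = fs₁.flatten ++ g₁ ∧ u₂ = g₂ ++ fs₂.flatten ∧
      decFactors (u₁ ++ x :: u₂) = fs₁ ++ (g₁ ++ x :: g₂) :: fs₂ ∧
      decFactors (u₁ ++ y :: u₂) = fs₁ ++ (g₁ ++ y :: g₂) :: fs₂ := by
  obtain ⟨fs₁, g₁, g₂, fs₂, hfs, rfl, rfl⟩ :=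
    exists_of_flatten_eq_append_cons (decFactors_flatten (u₁ ++ x :: u₂))
  refine ⟨fs₁, g₁, g₂, fs₂, rfl, rfl, hfs, ?_⟩
  have hdec := isDecFactorization_swap hl hr (hfs ▸ isDecFactorization_decFactors _)
  simpa using decFactors_flatten_of_isDecFactorization hdec

theorem shape_swap (hl : ∀ z ∈ u₁, z ≤ x ↔ z ≤ y) (hr : ∀ z ∈ u₂, x ≤ z ↔ y ≤ z) :
    shape (u₁ ++ y :: u₂) = shape (u₁ ++ x :: u₂) := by
  obtain ⟨fs₁, g₁, g₂, fs₂, -, -, hx, hy⟩ := exists_decFactors_swap hl hr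
  simp [shape, hx, hy]

theorem isQRWord_swap (hl : ∀ z ∈ u₁, z ≤ x ↔ z ≤ y) (hr : ∀ z ∈ u₂, x ≤ z ↔ y ≤ z)
    (h : IsQRWord (u₁ ++ x :: u₂)) : IsQRWord (u₁ ++ y :: u₂) := by
  obtain ⟨fs₁, g₁, g₂, fs₂, rfl, rfl, hx, hy⟩ := exists_decFactors_swap hl hr
  have hne : ∀ f ∈ fs₁ ++ fs₂, f ≠ [] := fun f hf => (isDecFactorization_decFactors _).1 f
    (by rw [hx]; simp only [mem_append, mem_cons] at hf ⊢; tauto)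
  unfold IsQRWord at h ⊢
  rw [hx] at h
  rw [hy]
  exact isChain_qr_swap hl hr hne h

end Swap

section Preservation

variable {n i : ℕ} {u v : List ℕ}

theorem exists_swap_of_qf_eq_some (h : qf i u = some v) :
    ∃ u₁ u₂, u = u₁ ++ i :: u₂ ∧ v = u₁ ++ (i + 1) :: u₂ ∧
      (∀ z ∈ u₁, z ≤ i ↔ z ≤ i + 1) ∧ ∀ z ∈ u₂, i ≤ z ↔ i + 1 ≤ z := by
  obtain ⟨hu, u₁, u₂, hu₂, rfl, rfl⟩ := qf_eq_some_iff.1 h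
  simp only [hasInv_append_iff, hasInv_cons_iff, mem_cons, true_or, and_true] at hu
  refine ⟨u₁, u₂, rfl, rfl, fun z hz => ?_, fun z hz => ?_⟩
  · have : z ≠ i + 1 := by rintro rfl; tauto
    omega
  · have : z ≠ i := by rintro rfl; exact hu₂ hz
    omega

theorem shape_eq_of_qf_eq_some (h : qf i u = some v) : shape v = shape u := by
  obtain ⟨u₁, u₂, rfl, rfl, hl, hr⟩ := exists_swap_of_qf_eq_some h
  exact shape_swap hl hr

theorem isQRWord_iff_of_qf_eq_some (h : qf i u = some v) : IsQRWord v ↔ IsQRWord u := by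
  obtain ⟨u₁, u₂, rfl, rfl, hl, hr⟩ := exists_swap_of_qf_eq_some h
  exact ⟨isQRWord_swap (fun z hz => (hl z hz).symm) (fun z hz => (hr z hz).symm),
    isQRWord_swap hl hr⟩

theorem isWord_iff_of_edge (h : Edge n i u v) : IsWord n v ↔ IsWord n u := by
  obtain ⟨hi, hin, h⟩ := h
  obtain ⟨-, u₁, u₂, -, rfl, rfl⟩ := qf_eq_some_iff.1 h
  simp only [IsWord, mem_append, mem_cons]
  constructor <;> intro hw z hz <;> rcases hz with hz | rfl | hz
  all_goals first | exact hw z (by tauto) | omega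

def qrWords (n : ℕ) (α : List ℕ) : Set (List ℕ) := {w | IsWord n w ∧ IsQRWord w ∧ shape w = α}

theorem mem_qrWords_iff_of_edge {α : List ℕ} (h : Edge n i u v) :
    v ∈ qrWords n α ↔ u ∈ qrWords n α := by
  simp only [qrWords, Set.mem_ofPred_eq, isWord_iff_of_edge h, isQRWord_iff_of_qf_eq_some h.2.2,
    shape_eq_of_qf_eq_some h.2.2]

theorem mem_qrWords_iff_of_adj {α : List ℕ} (h : Adj n u v) :
    u ∈ qrWords n α ↔ v ∈ qrWords n α := by
  obtain ⟨i, h | h⟩ := h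
  · exact (mem_qrWords_iff_of_edge h).symm
  · exact mem_qrWords_iff_of_edge h

theorem mem_qrWords_iff_of_sameComp {α : List ℕ} (h : SameComp n u v) :
    u ∈ qrWords n α ↔ v ∈ qrWords n α := by
  induction h with
  | refl => rfl
  | tail _ hadj ih => exact ih.trans (mem_qrWords_iff_of_adj hadj)

end Preservation

section RowLengths

theorem rowLengths_replicate_one {s : ℕ} (hs : 1 ≤ s) : rowLengths (replicate s 1) = [s] := by
  induction s with
  | zero => omega
  | succ s ih =>
    rcases s with _ | s
    · rfl
    · rw [replicate_succ, replicate_succ, rowLengths, ← replicate_succ, ih (by omega)]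
      rfl

theorem rowLengths_replicate_append {s d : ℕ} {ds : List ℕ} (hd : 1 ≤ d) :
    rowLengths (replicate s 1 ++ (d + 1) :: ds) = (s + 1) :: rowLengths (d :: ds) := by
  induction s with
  | zero =>
    obtain ⟨d, rfl⟩ := Nat.exists_eq_add_of_le' hd
    rcases ds with _ | ⟨e, rest⟩ <;> simp [rowLengths, replicate_succ]
  | succ s ih =>
    obtain ⟨e, rest, he⟩ := exists_cons_of_ne_nil
      (by simp : replicate s 1 ++ (d + 1) :: ds ≠ [])
    rw [replicate_succ, cons_append, he, rowLengths, ← he, ih]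
    rfl

end RowLengths

section HwCols

theorem hwCols_cons_cons {a b j : ℕ} {rest c : List ℕ} {cs : List (List ℕ)}
    (h : hwCols (b :: rest) (j + 1) = c :: cs) :
    hwCols (a :: b :: rest) j = replicate (a - 1) [j] ++ (c ++ [j]) :: cs := by
  rw [hwCols, h]

theorem exists_hwCols_eq_cons {α : List ℕ} (j : ℕ) (hpos : ∀ a ∈ α, 0 < a) (hα : α ≠ []) :
    ∃ c cs, hwCols α j = c :: cs ∧ j ∈ c := by
  rcases α with _ | ⟨a, _ | ⟨b, rest⟩⟩
  · contradiction
  · obtain ⟨a, rfl⟩ := Nat.exists_eq_add_of_lt (hpos a (by simp))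
    exact ⟨[j], replicate a [j], by simp [hwCols, replicate_succ], by simp⟩
  · obtain ⟨X, Y, h⟩ :
        ∃ X Y, hwCols (a :: b :: rest) j = replicate (a - 1) [j] ++ (X ++ [j]) :: Y := by
      rw [hwCols]; split
      · exact ⟨[], [], rfl⟩
      · exact ⟨_, _, rfl⟩
    cases ha : a - 1 with
    | zero => exact ⟨X ++ [j], Y, by simpa [ha] using h, by simp⟩
    | succ k => exact ⟨[j], _, by rw [h, ha, replicate_succ]; rfl, by simp⟩

theorem exists_hwCols_cons_cons {a b j : ℕ} {rest : List ℕ} (hpos : ∀ x ∈ b :: rest, 0 < x) :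
    ∃ c cs, hwCols (b :: rest) (j + 1) = c :: cs ∧ j + 1 ∈ c ∧
      hwCols (a :: b :: rest) j = replicate (a - 1) [j] ++ (c ++ [j]) :: cs := by
  obtain ⟨c, cs, h, hc⟩ := exists_hwCols_eq_cons (j + 1) hpos (cons_ne_nil b rest)
  exact ⟨c, cs, h, hc, hwCols_cons_cons h⟩

theorem mem_flatten_hwCols {α : List ℕ} {j z : ℕ} (hz : z ∈ (hwCols α j).flatten) :
    j ≤ z ∧ z < j + α.length := by
  induction α generalizing j with
  | nil => simp [hwCols] at hz
  | cons a β ih =>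
    rcases β with _ | ⟨b, rest⟩
    · simp only [hwCols, flatten_replicate_singleton, mem_replicate] at hz
      simp [hz.2]
    · have : z = j ∨ z ∈ (hwCols (b :: rest) (j + 1)).flatten := by
        rw [hwCols] at hz
        split at hz <;> simp_all <;> tauto
      rcases this with rfl | hz
      · simp
      · have := ih hz
        simp only [length_cons] at this ⊢
        omega

theorem isDecFactorization_hwCols {α : List ℕ} (j : ℕ) (hpos : ∀ a ∈ α, 0 < a) :
    IsDecFactorization (hwCols α j) := by
  induction α generalizing j with
  | nil => simp [hwCols]
  | cons a β ih =>
    rcases β with _ | ⟨b, rest⟩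
    · refine ⟨?_, ?_, isChain_replicate_of_rel a (by simp)⟩ <;>
        intro f hf <;> simp [eq_of_mem_replicate hf]
    have hpos' : ∀ x ∈ b :: rest, 0 < x := fun x hx => hpos x (mem_cons_of_mem a hx)
    obtain ⟨c, cs, hrec, hc, heq⟩ := exists_hwCols_cons_cons (a := a) (j := j) hpos'
    have hgt : ∀ z ∈ (c :: cs).flatten, j < z := fun z hz =>
      (mem_flatten_hwCols (hrec ▸ hz)).1
    have hrec' := ih (j + 1) hpos'
    rw [hrec, isDecFactorization_cons] at hrec'
    obtain ⟨-, hcdec, hccs, hcs⟩ := hrec'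
    obtain ⟨x, t, rfl⟩ := exists_cons_of_ne_nil (ne_nil_of_mem hc)
    rw [heq]
    refine isDecFactorization_replicate_append (isDecFactorization_cons.2
      ⟨by simp, isChain_append.2 ⟨hcdec, by simp, fun p hp q hq => ?_⟩, fun g hg => ?_, hcs⟩)
      (by simpa using (hgt x (by simp)).le)
    · obtain rfl : q = j := by simpa using hq.symm
      exact hgt p (mem_append_left _ (mem_of_mem_getLast? hp))
    · rw [getLastD_concat]
      have hg' := mem_of_mem_head? hg
      exact (hgt _ (mem_flatten.2 ⟨g, mem_cons_of_mem _ hg',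
        headD_mem (hcs.1 g hg') 0⟩)).le

theorem isChain_qr_hwCols {α : List ℕ} (j : ℕ) (hpos : ∀ a ∈ α, 0 < a) :
    (hwCols α j).IsChain fun c d => c.headD 0 ≤ d.getLastD 0 := by
  induction α generalizing j with
  | nil => simp [hwCols]
  | cons a β ih =>
    rcases β with _ | ⟨b, rest⟩
    · exact isChain_replicate_of_rel a (by simp)
    have hpos' : ∀ x ∈ b :: rest, 0 < x := fun x hx => hpos x (mem_cons_of_mem a hx)
    obtain ⟨c, cs, hrec, hc, heq⟩ := exists_hwCols_cons_cons (a := a) (j := j) hpos'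
    have hrec' := ih (j + 1) hpos'
    rw [hrec, isChain_cons] at hrec'
    obtain ⟨x, t, rfl⟩ := exists_cons_of_ne_nil (ne_nil_of_mem hc)
    rw [heq]
    refine isChain_replicate_append _ (by simp) (fun g hg => ?_)
      (isChain_cons.2 ⟨by simpa using hrec'.1, hrec'.2⟩)
    obtain rfl := Option.mem_some_iff.1 hg
    rw [getLastD_concat]
    rfl

theorem rowLengths_map_length_hwCols {α : List ℕ} (j : ℕ) (hpos : ∀ a ∈ α, 0 < a) :
    rowLengths ((hwCols α j).map length) = α := by
  induction α generalizing j with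
  | nil => rfl
  | cons a β ih =>
    rcases β with _ | ⟨b, rest⟩
    · simpa [hwCols] using rowLengths_replicate_one (hpos a (by simp))
    have hpos' : ∀ x ∈ b :: rest, 0 < x := fun x hx => hpos x (mem_cons_of_mem a hx)
    obtain ⟨c, cs, hrec, hc, heq⟩ := exists_hwCols_cons_cons (a := a) (j := j) hpos'
    have hrec' := ih (j + 1) hpos'
    rw [hrec, map_cons] at hrec'
    rw [heq, map_append, map_replicate, map_cons, length_append, length_singleton,
      rowLengths_replicate_append (length_pos_of_mem hc), hrec',
      Nat.sub_add_cancel (hpos a (by simp))]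

theorem hasInv_flatten_hwCols {α : List ℕ} {i j : ℕ} (hpos : ∀ a ∈ α, 0 < a) (hji : j ≤ i)
    (hi : i + 1 < j + α.length) : HasInv i (hwCols α j).flatten := by
  induction α generalizing j with
  | nil => simp at hi; omega
  | cons a β ih =>
    rcases β with _ | ⟨b, rest⟩
    · simp at hi; omega
    have hpos' : ∀ x ∈ b :: rest, 0 < x := fun x hx => hpos x (mem_cons_of_mem a hx)
    obtain ⟨c, cs, hrec, hc, heq⟩ := exists_hwCols_cons_cons (a := a) (j := j) hpos'
    rw [heq, flatten_append, flatten_cons]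
    rcases eq_or_lt_of_le hji with rfl | hji
    · exact (hasInv_append_iff (u := c) (v := [j]).2 (Or.inr (Or.inl ⟨hc, by simp⟩))).mono
        (by simp)
    · have := ih hpos' hji (by simp only [length_cons] at hi ⊢; omega)
      rw [hrec, flatten_cons] at this
      exact this.mono (by simp)

theorem decFactors_hwQR {α : List ℕ} (hpos : ∀ a ∈ α, 0 < a) : decFactors (hwQR α) = hwCols α 1 :=
  decFactors_flatten_of_isDecFactorization (isDecFactorization_hwCols 1 hpos)

theorem hwQR_mem_qrWords {n : ℕ} {α : List ℕ} (hpos : ∀ a ∈ α, 0 < a) (hlen : α.length ≤ n) :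
    hwQR α ∈ qrWords n α := by
  refine ⟨fun z hz => ?_, ?_, ?_⟩
  · have := mem_flatten_hwCols hz
    omega
  · unfold IsQRWord
    rw [decFactors_hwQR hpos]
    exact isChain_qr_hwCols 1 hpos
  · rw [shape, decFactors_hwQR hpos, rowLengths_map_length_hwCols 1 hpos]

theorem highestWeight_hwQR {n : ℕ} {α : List ℕ} (hpos : ∀ a ∈ α, 0 < a) :
    HighestWeight n (hwQR α) := by
  intro i hi hin
  rw [qe_eq_none_iff, or_iff_not_imp_right, not_not]
  intro hmem
  exact hasInv_flatten_hwCols hpos hi (by have := mem_flatten_hwCols hmem; omega)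

end HwCols

section Uniqueness

theorem le_headD_of_mem {f : List ℕ} {z : ℕ} (hf : f.IsChain (· > ·)) (hz : z ∈ f) :
    z ≤ f.headD 0 := by
  obtain ⟨x, t, rfl⟩ := exists_cons_of_ne_nil (ne_nil_of_mem hz)
  rw [isChain_iff_pairwise, pairwise_cons] at hf
  rcases mem_cons.1 hz with rfl | hz
  · rfl
  · exact (hf.1 z hz).le

theorem eq_singleton_of_headD_le {f : List ℕ} {j : ℕ} (hf : f ≠ []) (hdec : f.IsChain (· > ·))
    (hge : ∀ z ∈ f, j ≤ z) (hhead : f.headD 0 ≤ j) : f = [j] := by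
  obtain ⟨x, t, rfl⟩ := exists_cons_of_ne_nil hf
  rw [isChain_iff_pairwise, pairwise_cons] at hdec
  obtain rfl : x = j := le_antisymm hhead (hge x (by simp))
  obtain rfl : t = [] := eq_nil_iff_forall_not_mem.2 fun z hz => by
    have := hdec.1 z hz; have := hge z (by simp [hz]); omega
  rfl

theorem exists_eq_append_singleton {f : List ℕ} {j : ℕ} (hdec : f.IsChain (· > ·))
    (hge : ∀ z ∈ f, j ≤ z) (hj : j ∈ f) : ∃ c, f = c ++ [j] ∧ ∀ z ∈ c, j < z := by
  induction f with
  | nil => simp at hj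
  | cons x t ih =>
    have hx := (isChain_iff_pairwise.1 hdec)
    rw [pairwise_cons] at hx
    by_cases hjt : j ∈ t
    · obtain ⟨c, rfl, hc⟩ := ih (isChain_iff_pairwise.2 hx.2)
        (fun z hz => hge z (mem_cons_of_mem x hz)) hjt
      refine ⟨x :: c, rfl, fun z hz => ?_⟩
      rcases mem_cons.1 hz with rfl | hz
      · exact hx.1 j hjt
      · exact hc z hz
    · obtain rfl : j = x := by simpa [hjt] using hj
      obtain rfl : t = [] := eq_nil_iff_forall_not_mem.2 fun z hz => by
        have := hx.1 z hz; have := hge z (by simp [hz]); omega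
      exact ⟨[], rfl, by simp⟩

theorem exists_eq_replicate_append {fs : List (List ℕ)} {j : ℕ} (hfs : IsDecFactorization fs)
    (hqr : fs.IsChain fun c d => c.headD 0 ≤ d.getLastD 0) (hge : ∀ z ∈ fs.flatten, j ≤ z)
    (hj : j ∈ fs.flatten) :
    ∃ s c tail, fs = replicate s [j] ++ (c ++ [j]) :: tail ∧ ∀ z ∈ c ++ tail.flatten, j < z := by
  induction fs with
  | nil => simp at hj
  | cons f fs ih =>
    obtain ⟨hf, hfdec, -, hfs⟩ := isDecFactorization_cons.1 hfs
    obtain ⟨hlink, hqr⟩ := isChain_cons.1 hqr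
    simp only [flatten_cons, mem_append] at hge hj
    by_cases hjfs : j ∈ fs.flatten
    · obtain ⟨s, c, tail, rfl, hgt⟩ := ih hfs hqr (fun z hz => hge z (Or.inr hz)) hjfs
      have hfj : f = [j] := by
        obtain ⟨g, hg, hgj⟩ : ∃ g, (replicate s [j] ++ (c ++ [j]) :: tail).head? = some g ∧
            g.getLastD 0 = j := by
          cases s <;> simp [replicate_succ]
        exact eq_singleton_of_headD_le hf hfdec (fun z hz => hge z (Or.inl hz)) (hgj ▸ hlink g hg)
      exact ⟨s + 1, c, tail, by simp [hfj, replicate_succ], hgt⟩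
    · obtain ⟨c, rfl, hc⟩ := exists_eq_append_singleton hfdec (fun z hz => hge z (Or.inl hz))
        (hj.resolve_right hjfs)
      refine ⟨0, c, fs, rfl, fun z hz => ?_⟩
      rcases mem_append.1 hz with hz | hz
      · exact hc z hz
      · exact lt_of_le_of_ne (hge z (Or.inr hz)) (by rintro rfl; exact hjfs hz)

theorem hasInv_of_hasInv_replicate_append {i j s : ℕ} {c T : List ℕ} (hij : j < i)
    (h : HasInv i (replicate s j ++ (c ++ j :: T))) : HasInv i (c ++ T) := by
  have hi : i ≠ j := by omega
  have hi' : i + 1 ≠ j := by omega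
  simp only [hasInv_append_iff, hasInv_cons_iff, mem_replicate, mem_cons, hi, hi',
    not_hasInv_replicate, false_or, and_false, false_and] at h ⊢
  tauto

theorem mem_of_forall_hasInv {j : ℕ} {w : List ℕ} (hw : w ≠ []) (hge : ∀ z ∈ w, j ≤ z)
    (hinv : ∀ i, j ≤ i → i + 1 ∈ w → HasInv i w) : j ∈ w := by
  obtain ⟨m, hm⟩ := Option.isSome_iff_exists.1 (isSome_min?_of_ne_nil hw)
  obtain ⟨hmw, hmin⟩ := min?_eq_some_iff.1 hm
  by_contra hj
  have hjm : j < m := lt_of_le_of_ne (hge m hmw) (by rintro rfl; exact hj hmw)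
  have := hmin (m - 1)
    (hinv (m - 1) (by omega) (by rwa [Nat.sub_add_cancel (by omega)])).mem_right
  omega

theorem eq_nil_of_forall_hasInv {j s : ℕ} {T : List ℕ} (hgt : ∀ z ∈ T, j < z)
    (hinv : ∀ i, j ≤ i → i + 1 ∈ replicate s j ++ j :: T →
      HasInv i (replicate s j ++ j :: T)) : T = [] := by
  by_contra hT
  have hj₁ : j + 1 ∈ T := mem_of_forall_hasInv hT hgt fun i hi hiT =>
    hasInv_of_hasInv_replicate_append (c := []) hi (hinv i (by omega) (by simp [hiT]))
  have := hinv j le_rfl (by simp [hj₁])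
  simp only [hasInv_append_iff, hasInv_cons_iff, mem_replicate, not_hasInv_replicate,
    false_or] at this
  rcases this with ⟨⟨-, h⟩, -⟩ | ⟨h, -⟩ | h
  · omega
  · omega
  · exact lt_irrefl j (hgt j h.mem_right)

theorem isDecFactorization_of_append_singleton {c : List ℕ} {j : ℕ} {tail : List (List ℕ)}
    (hc : c ≠ []) (h : IsDecFactorization ((c ++ [j]) :: tail))
    (hqr : ((c ++ [j]) :: tail).IsChain fun c d => c.headD 0 ≤ d.getLastD 0) :
    IsDecFactorization (c :: tail) ∧ (c :: tail).IsChain fun c d => c.headD 0 ≤ d.getLastD 0 := by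
  obtain ⟨x, t, rfl⟩ := exists_cons_of_ne_nil hc
  obtain ⟨-, hdec, -, htail⟩ := isDecFactorization_cons.1 h
  obtain ⟨hlink, hqr⟩ := isChain_cons.1 hqr
  simp only [cons_append, headD_cons] at hlink
  refine ⟨isDecFactorization_cons.2 ⟨hc, hdec.left_of_append, fun g hg => ?_, htail⟩,
    isChain_cons.2 ⟨hlink, hqr⟩⟩
  have hg' := mem_of_mem_head? hg
  have hgne := htail.1 g hg'
  calc (x :: t).getLastD 0 ≤ x := le_headD_of_mem hdec.left_of_append (getLastD_mem hc 0)
    _ ≤ g.getLastD 0 := hlink g hg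
    _ ≤ g.headD 0 := le_headD_of_mem (htail.2.1 g hg') (getLastD_mem hgne 0)

theorem decFactors_eq_hwCols {j : ℕ} {w : List ℕ} (hge : ∀ z ∈ w, j ≤ z) (hqr : IsQRWord w)
    (hinv : ∀ i, j ≤ i → i + 1 ∈ w → HasInv i w) : decFactors w = hwCols (shape w) j := by
  induction hlen : w.length using Nat.strong_induction_on generalizing w j with
  | _ N ih =>
  rcases eq_or_ne w [] with rfl | hw
  · rfl
  have hdec := isDecFactorization_decFactors w
  obtain ⟨s, c, tail, hfs, hgt⟩ := exists_eq_replicate_append hdec hqr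
    (fun z hz => hge z (decFactors_flatten w ▸ hz))
    (by rw [decFactors_flatten]; exact mem_of_forall_hasInv hw hge hinv)
  have hw' : w = replicate s j ++ (c ++ j :: tail.flatten) := by
    rw [← decFactors_flatten w, hfs]; simp
  unfold IsQRWord at hqr
  rw [hfs] at hdec hqr
  simp only [shape, hfs]
  rcases eq_or_ne c [] with rfl | hc
  · have htail : tail.flatten = [] :=
      eq_nil_of_forall_hasInv (s := s) (by simpa using hgt)
        (fun i hi hiw => hw' ▸ hinv i hi (hw' ▸ hiw))
    obtain rfl : tail = [] := eq_nil_iff_forall_not_mem.2 fun g hg =>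
      (hdec.1 g (by simp [hg])) (flatten_eq_nil_iff.1 htail g hg)
    rw [show replicate s [j] ++ [[] ++ [j]] = replicate (s + 1) [j] by simp [replicate_succ'],
      map_replicate, length_singleton, rowLengths_replicate_one (Nat.succ_pos s)]
    rfl
  obtain ⟨hdec', hqr'⟩ := isDecFactorization_of_append_singleton hc
    hdec.of_append_right hqr.right_of_append
  have hdw' := decFactors_flatten_of_isDecFactorization hdec'
  have hrec := ih _ (by rw [← hlen, hw']; simp; omega) (j := j + 1) (w := c ++ tail.flatten)
    hgt (by unfold IsQRWord; rwa [← flatten_cons, hdw'])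
    (fun i hi hiw => hasInv_of_hasInv_replicate_append (by omega)
      (hw' ▸ hinv i (by omega) (by rw [hw']; simp only [mem_append, mem_cons] at hiw ⊢; tauto)))
    rfl
  rw [← flatten_cons, hdw', shape, hdw', map_cons] at hrec
  obtain ⟨b, rest, hshape⟩ : ∃ b rest, rowLengths (c.length :: map length tail) = b :: rest :=
    exists_cons_of_ne_nil fun h => by rw [h] at hrec; simp [hwCols] at hrec
  rw [map_append, map_replicate, map_cons, length_append, length_singleton,
    rowLengths_replicate_append (length_pos_of_ne_nil hc), hshape,
    hwCols_cons_cons (hshape ▸ hrec).symm, Nat.add_sub_cancel]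

theorem hasInv_of_highestWeight {n : ℕ} {w : List ℕ} (hword : IsWord n w)
    (hhw : HighestWeight n w) {i : ℕ} (hi : 1 ≤ i) (hiw : i + 1 ∈ w) : HasInv i w :=
  ((qe_eq_none_iff.1 (hhw i hi (by have := hword _ hiw; omega))).resolve_right (not_not.2 hiw))

theorem eq_hwQR_of_highestWeight {n : ℕ} {w : List ℕ} (hword : IsWord n w) (hqr : IsQRWord w)
    (hhw : HighestWeight n w) : w = hwQR (shape w) := by
  rw [hwQR, ← decFactors_eq_hwCols (fun z hz => (hword z hz).1) hqr
    fun i hi => hasInv_of_highestWeight hword hhw hi, decFactors_flatten]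

end Uniqueness

theorem sameComp_hwQR_shape {n : ℕ} {u : List ℕ} (hword : IsWord n u) (hqr : IsQRWord u) :
    SameComp n (hwQR (shape u)) u := by
  induction hsum : u.sum using Nat.strong_induction_on generalizing u with
  | _ N ih =>
  by_cases hhw : HighestWeight n u
  · rw [← eq_hwQR_of_highestWeight hword hqr hhw]
    exact .refl
  obtain ⟨i, hi, hin, hne⟩ : ∃ i, 1 ≤ i ∧ i < n ∧ qe i u ≠ none := by
    simpa [HighestWeight] using hhw
  obtain ⟨v, hv⟩ := Option.ne_none_iff_exists'.1 hne
  have hedge : Edge n i v u := ⟨hi, hin, qf_eq_some_iff_qe_eq_some.2 hv⟩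
  obtain ⟨hvword, hvqr, hvshape⟩ :=
    (mem_qrWords_iff_of_edge (α := shape u) hedge).1 ⟨hword, hqr, rfl⟩
  have hcomp := ih v.sum (by rw [← hsum, ← sum_add_one_of_qe_eq_some hv]; omega) hvword hvqr rfl
  rw [hvshape] at hcomp
  exact hcomp.tail ⟨i, Or.inl hedge⟩

/-- Let `α` be a composition with `ℓ(α) ≤ n`. Then (1) the set of
quasi-ribbon words in `𝒜_n^*` of shape `α` is exactly the vertex set of a single
connected component of `Γ(hypo_n)`; and (2) this component contains a unique
highest-weight word, namely the column reading `hwQR α` of the quasi-ribbon tableau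
of shape `α` whose `j`-th row consists entirely of symbols `j`. -/
theorem quasiRibbon_words_single_component (n : ℕ) (α : List ℕ)
    (hpos : ∀ a ∈ α, 0 < a) (hlen : α.length ≤ n) :
    (∃ w₀, {w | IsWord n w ∧ IsQRWord w ∧ shape w = α} = {w | SameComp n w₀ w}) ∧
    (IsWord n (hwQR α) ∧ IsQRWord (hwQR α) ∧ shape (hwQR α) = α) ∧
    (∀ w, IsWord n w → IsQRWord w → shape w = α →
      (HighestWeight n w ↔ w = hwQR α)) := by
  have hwα : hwQR α ∈ qrWords n α := hwQR_mem_qrWords hpos hlen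
  refine ⟨⟨hwQR α, Set.ext fun w => ⟨fun ⟨hword, hqr, hshape⟩ => ?_,
    fun h => (mem_qrWords_iff_of_sameComp h).1 hwα⟩⟩, hwα, fun w hword hqr hshape => ⟨?_, ?_⟩⟩
  · exact hshape ▸ sameComp_hwQR_shape hword hqr
  · exact fun hhw => hshape ▸ eq_hwQR_of_highestWeight hword hqr hhw
  · rintro rfl
    exact highestWeight_hwQR hpos

end HypoCrystal
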